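/- Global linear convergence of last-iterate PDHG on sharp problems: let {z^k} be the PDHG iterates for the saddle-point formulation of a standard-form LP with step size 0 < s ≤ 1/(2‖A‖₂), suppose R > 0 is an upper bound on ‖z^k‖₂ for all k, and suppose the saddle-point problem is α-sharp on {z : ‖z‖₂ ≤ R} for some α > 0. Let K = ⌈4e/(sα)²⌉. Then for every k ≥ K, dist_{P_s}(z^k, Z*) ≤ exp(1/2 − k/(2K))·dist_{P_s}(z⁰, Z*). -/

import Mathlib

open Matrix Filter

/-- Euclidean norm of a vector in `ℝ^d`. -/
noncomputable def enorm {d : ℕ} (x : Fin d → ℝ) : ℝ := Real.sqrt (x ⬝ᵥ x)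

/-- Spectral norm (ℓ₂ operator norm) of a matrix. -/
noncomputable def specNorm {m n : ℕ} (A : Matrix (Fin m) (Fin n) ℝ) : ℝ :=
  sSup {t | ∃ x : Fin n → ℝ, x ⬝ᵥ x ≤ 1 ∧ t = _root_.enorm (A.mulVec x)}

/-- Componentwise positive part (projection onto the nonnegative orthant). -/
def projPos {d : ℕ} (x : Fin d → ℝ) : Fin d → ℝ := fun i => max (x i) 0

/-- One PDHG iteration with equal primal/dual step size `s`. -/
noncomputable def pdhgT {m n : ℕ} (A : Matrix (Fin m) (Fin n) ℝ) (b : Fin m → ℝ)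
    (c : Fin n → ℝ) (s : ℝ) (z : (Fin n → ℝ) × (Fin m → ℝ)) : (Fin n → ℝ) × (Fin m → ℝ) :=
  let x' := projPos (z.1 + s • Aᵀ.mulVec z.2 - s • c)
  (x', z.2 - s • A.mulVec ((2 : ℝ) • x' - z.1) + s • b)

/-- The Lagrangian `L(x,y) = cᵀx - yᵀAx + bᵀy`. -/
noncomputable def lagr {m n : ℕ} (A : Matrix (Fin m) (Fin n) ℝ) (b : Fin m → ℝ)
    (c : Fin n → ℝ) (x : Fin n → ℝ) (y : Fin m → ℝ) : ℝ :=
  c ⬝ᵥ x - y ⬝ᵥ A.mulVec x + b ⬝ᵥ y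

/-- Membership in `Z = ℝ₊ⁿ × ℝᵐ`. -/
def inZ {m n : ℕ} (z : (Fin n → ℝ) × (Fin m → ℝ)) : Prop := ∀ i, 0 ≤ z.1 i

/-- Saddle point of `L` over `Z`. -/
def isSaddle {m n : ℕ} (A : Matrix (Fin m) (Fin n) ℝ) (b : Fin m → ℝ) (c : Fin n → ℝ)
    (z : (Fin n → ℝ) × (Fin m → ℝ)) : Prop :=
  inZ z ∧ ∀ w : (Fin n → ℝ) × (Fin m → ℝ), inZ w →
    lagr A b c z.1 w.2 ≤ lagr A b c z.1 z.2 ∧ lagr A b c z.1 z.2 ≤ lagr A b c w.1 z.2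

/-- The quadratic form `‖z‖²_{P_s}` induced by `P_s = [[(1/s)I, Aᵀ],[A,(1/s)I]]`. -/
noncomputable def PsSq {m n : ℕ} (A : Matrix (Fin m) (Fin n) ℝ) (s : ℝ)
    (z : (Fin n → ℝ) × (Fin m → ℝ)) : ℝ :=
  (1 / s) * (z.1 ⬝ᵥ z.1 + z.2 ⬝ᵥ z.2) + 2 * (A.mulVec z.1 ⬝ᵥ z.2)

/-- The `P_s` norm. -/
noncomputable def PsNorm {m n : ℕ} (A : Matrix (Fin m) (Fin n) ℝ) (s : ℝ)
    (z : (Fin n → ℝ) × (Fin m → ℝ)) : ℝ := Real.sqrt (PsSq A s z)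

/-- Euclidean norm on the primal-dual pair space. -/
noncomputable def enormP {m n : ℕ} (z : (Fin n → ℝ) × (Fin m → ℝ)) : ℝ :=
  Real.sqrt (z.1 ⬝ᵥ z.1 + z.2 ⬝ᵥ z.2)

/-- Normalized duality gap `ρ_r(z)`. -/
noncomputable def rho {m n : ℕ} (A : Matrix (Fin m) (Fin n) ℝ) (b : Fin m → ℝ)
    (c : Fin n → ℝ) (r : ℝ) (z : (Fin n → ℝ) × (Fin m → ℝ)) : ℝ :=
  (1 / r) * sSup {g | ∃ w : (Fin n → ℝ) × (Fin m → ℝ), inZ w ∧ enormP (w - z) ≤ r ∧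
    g = lagr A b c z.1 w.2 - lagr A b c w.1 z.2}

/-- Euclidean distance to the saddle-point set `Z*`. -/
noncomputable def dist2 {m n : ℕ} (A : Matrix (Fin m) (Fin n) ℝ) (b : Fin m → ℝ)
    (c : Fin n → ℝ) (z : (Fin n → ℝ) × (Fin m → ℝ)) : ℝ :=
  sInf {d | ∃ w, isSaddle A b c w ∧ d = enormP (z - w)}

/-- `P_s`-distance to the saddle-point set `Z*`. -/
noncomputable def distPs {m n : ℕ} (A : Matrix (Fin m) (Fin n) ℝ) (b : Fin m → ℝ)
    (c : Fin n → ℝ) (s : ℝ) (z : (Fin n → ℝ) × (Fin m → ℝ)) : ℝ :=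
  sInf {d | ∃ w, isSaddle A b c w ∧ d = PsNorm A s (z - w)}

/-- `v` is the infimal displacement vector of `T`: the minimum-`P_s`-norm element
of the closure of `range (T - I)`. -/
def isIDV {m n : ℕ} (A : Matrix (Fin m) (Fin n) ℝ) (s : ℝ)
    (T : (Fin n → ℝ) × (Fin m → ℝ) → (Fin n → ℝ) × (Fin m → ℝ))
    (v : (Fin n → ℝ) × (Fin m → ℝ)) : Prop :=
  v ∈ closure {w | ∃ z, w = T z - z} ∧
  ∀ w ∈ closure {w | ∃ z, w = T z - z}, PsNorm A s v ≤ PsNorm A s w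

lemma dot_self_nonneg {d : ℕ} (x : Fin d → ℝ) : 0 ≤ x ⬝ᵥ x :=
  Finset.sum_nonneg fun i _ => mul_self_nonneg _

lemma dot_self_eq_zero {d : ℕ} {x : Fin d → ℝ} (h : x ⬝ᵥ x = 0) : x = 0 := by
  funext i
  have := (Finset.sum_eq_zero_iff_of_nonneg (fun i _ => mul_self_nonneg (x i))).1 h i
    (Finset.mem_univ i)
  have := mul_self_eq_zero.1 this
  simpa using this

lemma enorm_nonneg {d : ℕ} (x : Fin d → ℝ) : 0 ≤ _root_.enorm x := Real.sqrt_nonneg _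

lemma enorm_sq {d : ℕ} (x : Fin d → ℝ) : _root_.enorm x ^ 2 = x ⬝ᵥ x :=
  Real.sq_sqrt (dot_self_nonneg x)

lemma abs_dot_le {d : ℕ} (u v : Fin d → ℝ) : |u ⬝ᵥ v| ≤ _root_.enorm u * _root_.enorm v := by
  have h := Finset.sum_mul_sq_le_sq_mul_sq Finset.univ u v
  have h2 : (u ⬝ᵥ v) ^ 2 ≤ (u ⬝ᵥ u) * (v ⬝ᵥ v) := by
    simpa [dotProduct, sq] using h
  have h3 : (u ⬝ᵥ v) ^ 2 ≤ (_root_.enorm u * _root_.enorm v) ^ 2 := by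
    calc (u ⬝ᵥ v) ^ 2 ≤ (u ⬝ᵥ u) * (v ⬝ᵥ v) := h2
      _ = (_root_.enorm u * _root_.enorm v) ^ 2 := by rw [mul_pow, enorm_sq, enorm_sq]
  have hnn : 0 ≤ _root_.enorm u * _root_.enorm v := mul_nonneg (enorm_nonneg u) (enorm_nonneg v)
  exact abs_le.2 (abs_le_of_sq_le_sq' h3 hnn)

lemma enorm_smul_real {d : ℕ} (r : ℝ) (x : Fin d → ℝ) : _root_.enorm (r • x) = |r| * _root_.enorm x := by
  unfold _root_.enorm
  rw [smul_dotProduct, dotProduct_smul, smul_eq_mul, smul_eq_mul, ← mul_assoc,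
    Real.sqrt_mul (mul_self_nonneg r), Real.sqrt_mul_self_eq_abs r]

lemma specNorm_set_nonempty {m n : ℕ} (A : Matrix (Fin m) (Fin n) ℝ) :
    (0:ℝ) ∈ {t | ∃ x : Fin n → ℝ, x ⬝ᵥ x ≤ 1 ∧ t = _root_.enorm (A.mulVec x)} := by
  refine ⟨0, by simp [dotProduct], ?_⟩
  simp [Matrix.mulVec_zero, _root_.enorm, dotProduct]

lemma specNorm_set_bdd {m n : ℕ} (A : Matrix (Fin m) (Fin n) ℝ) :
    BddAbove {t | ∃ x : Fin n → ℝ, x ⬝ᵥ x ≤ 1 ∧ t = _root_.enorm (A.mulVec x)} := by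
  refine ⟨Real.sqrt (∑ i, ∑ j, A i j ^ 2), fun t ht => ?_⟩
  obtain ⟨x, hx, rfl⟩ := ht
  unfold _root_.enorm
  apply Real.sqrt_le_sqrt
  have hterm : ∀ i : Fin m, (A.mulVec x i) * (A.mulVec x i) ≤ ∑ j, A i j ^ 2 := by
    intro i
    have h := Finset.sum_mul_sq_le_sq_mul_sq Finset.univ (fun j => A i j) x
    have hx2 : (∑ j, x j ^ 2) ≤ 1 := by simpa [dotProduct, sq] using hx
    have : (∑ j, A i j * x j) ^ 2 ≤ (∑ j, A i j ^ 2) * 1 := by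
      refine h.trans ?_
      exact mul_le_mul_of_nonneg_left hx2 (Finset.sum_nonneg fun j _ => sq_nonneg _)
    simpa [Matrix.mulVec, dotProduct, sq] using this
  calc A.mulVec x ⬝ᵥ A.mulVec x = ∑ i, (A.mulVec x i) * (A.mulVec x i) := rfl
    _ ≤ ∑ i, ∑ j, A i j ^ 2 := Finset.sum_le_sum fun i _ => hterm i

lemma specNorm_nonneg {m n : ℕ} (A : Matrix (Fin m) (Fin n) ℝ) : 0 ≤ specNorm A :=
  le_csSup (specNorm_set_bdd A) (specNorm_set_nonempty A)

lemma mulVec_enorm_le {m n : ℕ} (A : Matrix (Fin m) (Fin n) ℝ) (x : Fin n → ℝ) :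
    _root_.enorm (A.mulVec x) ≤ specNorm A * _root_.enorm x := by
  rcases eq_or_ne (_root_.enorm x) 0 with h0 | h0
  · have hx : x = 0 := by
      have : x ⬝ᵥ x = 0 := by
        have := enorm_sq x; rw [h0] at this; simpa using this.symm
      exact dot_self_eq_zero this
    subst hx
    simp [Matrix.mulVec_zero, h0, _root_.enorm, dotProduct]
  · have hpos : 0 < _root_.enorm x := lt_of_le_of_ne (enorm_nonneg x) (Ne.symm h0)
    set w : Fin n → ℝ := (_root_.enorm x)⁻¹ • x with hw
    have hw1 : w ⬝ᵥ w ≤ 1 := by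
      have : _root_.enorm w = 1 := by
        rw [hw, enorm_smul_real, abs_of_nonneg (by positivity), inv_mul_cancel₀ h0]
      calc w ⬝ᵥ w = _root_.enorm w ^ 2 := (enorm_sq w).symm
        _ ≤ 1 := by rw [this]; norm_num
    have hmem : _root_.enorm (A.mulVec w) ∈ {t | ∃ x : Fin n → ℝ, x ⬝ᵥ x ≤ 1 ∧ t = _root_.enorm (A.mulVec x)} :=
      ⟨w, hw1, rfl⟩
    have hle : _root_.enorm (A.mulVec w) ≤ specNorm A := le_csSup (specNorm_set_bdd A) hmem
    have heq : _root_.enorm (A.mulVec w) = (_root_.enorm x)⁻¹ * _root_.enorm (A.mulVec x) := by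
      rw [hw, Matrix.mulVec_smul, enorm_smul_real, abs_of_nonneg (by positivity)]
    rw [heq] at hle
    calc _root_.enorm (A.mulVec x) = _root_.enorm x * ((_root_.enorm x)⁻¹ * _root_.enorm (A.mulVec x)) := by
          field_simp
      _ ≤ _root_.enorm x * specNorm A := by
          exact mul_le_mul_of_nonneg_left hle (le_of_lt hpos)
      _ = specNorm A * _root_.enorm x := mul_comm _ _

section Ps
variable {m n : ℕ} (A : Matrix (Fin m) (Fin n) ℝ) (s : ℝ)

/-- Symmetric bilinear form associated to `PsSq`. -/
noncomputable def Bf (z w : (Fin n → ℝ) × (Fin m → ℝ)) : ℝ :=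
  (1 / s) * (z.1 ⬝ᵥ w.1 + z.2 ⬝ᵥ w.2) + (A.mulVec z.1 ⬝ᵥ w.2) + (A.mulVec w.1 ⬝ᵥ z.2)

lemma Bf_self (z : (Fin n → ℝ) × (Fin m → ℝ)) : Bf A s z z = PsSq A s z := by
  unfold Bf PsSq; ring

lemma dot_bound {m n : ℕ} (A : Matrix (Fin m) (Fin n) ℝ) {s : ℝ} (hs : 0 < s)
    (hsA : 2 * s * specNorm A ≤ 1) (z : (Fin n → ℝ) × (Fin m → ℝ)) :
    |2 * (A.mulVec z.1 ⬝ᵥ z.2)| ≤ (1 / (2 * s)) * (z.1 ⬝ᵥ z.1 + z.2 ⬝ᵥ z.2) := by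
  set a := _root_.enorm z.1 with ha'
  set b := _root_.enorm z.2 with hb'
  set N := specNorm A with hN'
  have ha : 0 ≤ a := enorm_nonneg _
  have hb : 0 ≤ b := enorm_nonneg _
  have hN : 0 ≤ N := specNorm_nonneg A
  have h1 : |A.mulVec z.1 ⬝ᵥ z.2| ≤ N * a * b := by
    calc |A.mulVec z.1 ⬝ᵥ z.2| ≤ _root_.enorm (A.mulVec z.1) * _root_.enorm z.2 := abs_dot_le _ _
      _ ≤ N * a * b := mul_le_mul_of_nonneg_right (mulVec_enorm_le A z.1) hb
  have h4 : 4 * s * (N * a * b) ≤ a ^ 2 + b ^ 2 := by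
    nlinarith [sq_nonneg (a - b), mul_nonneg (sub_nonneg.2 hsA) (mul_nonneg ha hb)]
  have h5 : 2 * (N * a * b) ≤ (1 / (2 * s)) * (a ^ 2 + b ^ 2) := by
    have heq : (1 / (2 * s)) * (a ^ 2 + b ^ 2) - 2 * (N * a * b)
        = (1 / (2 * s)) * ((a ^ 2 + b ^ 2) - 4 * s * (N * a * b)) := by
      field_simp; ring
    nlinarith [mul_nonneg (le_of_lt (by positivity : (0:ℝ) < 1 / (2 * s)))
      (sub_nonneg.2 h4)]
  have h6 : |2 * (A.mulVec z.1 ⬝ᵥ z.2)| = 2 * |A.mulVec z.1 ⬝ᵥ z.2| := by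
    rw [abs_mul]; norm_num
  rw [h6, ← enorm_sq z.1, ← enorm_sq z.2]
  linarith [h1]

lemma PsSq_lower {m n : ℕ} (A : Matrix (Fin m) (Fin n) ℝ) {s : ℝ} (hs : 0 < s)
    (hsA : 2 * s * specNorm A ≤ 1) (z : (Fin n → ℝ) × (Fin m → ℝ)) :
    (1 / (2 * s)) * (z.1 ⬝ᵥ z.1 + z.2 ⬝ᵥ z.2) ≤ PsSq A s z := by
  have h := abs_le.1 (dot_bound A hs hsA z)
  have hrel : 1 / s = 2 * (1 / (2 * s)) := by field_simp
  unfold PsSq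
  rw [hrel]
  linarith [h.1, h.2]

lemma PsSq_upper {m n : ℕ} (A : Matrix (Fin m) (Fin n) ℝ) {s : ℝ} (hs : 0 < s)
    (hsA : 2 * s * specNorm A ≤ 1) (z : (Fin n → ℝ) × (Fin m → ℝ)) :
    PsSq A s z ≤ (3 / (2 * s)) * (z.1 ⬝ᵥ z.1 + z.2 ⬝ᵥ z.2) := by
  have h := abs_le.1 (dot_bound A hs hsA z)
  have hrel : 1 / s = 2 * (1 / (2 * s)) := by field_simp
  have hrel2 : 3 / (2 * s) = 3 * (1 / (2 * s)) := by field_simp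
  unfold PsSq
  rw [hrel, hrel2]
  linarith [h.1, h.2]

lemma PsSq_nonneg {m n : ℕ} (A : Matrix (Fin m) (Fin n) ℝ) {s : ℝ} (hs : 0 < s)
    (hsA : 2 * s * specNorm A ≤ 1) (z : (Fin n → ℝ) × (Fin m → ℝ)) : 0 ≤ PsSq A s z := by
  refine le_trans ?_ (PsSq_lower A hs hsA z)
  have := dot_self_nonneg z.1
  have := dot_self_nonneg z.2
  positivity

lemma PsNorm_nonneg {m n : ℕ} (A : Matrix (Fin m) (Fin n) ℝ) (s : ℝ)
    (z : (Fin n → ℝ) × (Fin m → ℝ)) : 0 ≤ PsNorm A s z := Real.sqrt_nonneg _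

lemma PsNorm_sq {m n : ℕ} (A : Matrix (Fin m) (Fin n) ℝ) {s : ℝ} (hs : 0 < s)
    (hsA : 2 * s * specNorm A ≤ 1) (z : (Fin n → ℝ) × (Fin m → ℝ)) :
    PsNorm A s z ^ 2 = PsSq A s z := Real.sq_sqrt (PsSq_nonneg A hs hsA z)

lemma enormP_nonneg {m n : ℕ} (z : (Fin n → ℝ) × (Fin m → ℝ)) : 0 ≤ enormP z :=
  Real.sqrt_nonneg _

lemma enormP_sq {m n : ℕ} (z : (Fin n → ℝ) × (Fin m → ℝ)) :
    enormP z ^ 2 = z.1 ⬝ᵥ z.1 + z.2 ⬝ᵥ z.2 :=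
  Real.sq_sqrt (by have := dot_self_nonneg z.1; have := dot_self_nonneg z.2; linarith)

lemma PsNorm_le_enormP {m n : ℕ} (A : Matrix (Fin m) (Fin n) ℝ) {s : ℝ} (hs : 0 < s)
    (hsA : 2 * s * specNorm A ≤ 1) (z : (Fin n → ℝ) × (Fin m → ℝ)) :
    PsNorm A s z ≤ Real.sqrt (3 / (2 * s)) * enormP z := by
  unfold PsNorm enormP
  rw [← Real.sqrt_mul (by positivity) _]
  exact Real.sqrt_le_sqrt (PsSq_upper A hs hsA z)

end Ps

section BfLemmas
variable {m n : ℕ} (A : Matrix (Fin m) (Fin n) ℝ) (s : ℝ)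

lemma PsSq_expand_comb (a b : ℝ) (z w : (Fin n → ℝ) × (Fin m → ℝ)) :
    PsSq A s (a • z - b • w) =
      a ^ 2 * PsSq A s z - 2 * a * b * Bf A s z w + b ^ 2 * PsSq A s w := by
  unfold PsSq Bf
  simp only [Prod.fst_sub, Prod.snd_sub, Prod.smul_fst, Prod.smul_snd,
    sub_dotProduct, dotProduct_sub, smul_dotProduct,
    dotProduct_smul, Matrix.mulVec_sub, Matrix.mulVec_smul, smul_eq_mul]
  rw [dotProduct_comm w.1 z.1, dotProduct_comm w.2 z.2,
    dotProduct_comm (A.mulVec w.1) z.2, dotProduct_comm (A.mulVec z.1) w.2]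
  ring

lemma PsSq_sub_expand (z w : (Fin n → ℝ) × (Fin m → ℝ)) :
    PsSq A s (z - w) = PsSq A s z - 2 * Bf A s z w + PsSq A s w := by
  have h := PsSq_expand_comb A s 1 1 z w
  simpa using h

lemma PsSq_eq_zero {s : ℝ} (hs : 0 < s) (hsA : 2 * s * specNorm A ≤ 1)
    {z : (Fin n → ℝ) × (Fin m → ℝ)} (h : PsSq A s z = 0) : z = 0 := by
  have hl := PsSq_lower A hs hsA z
  rw [h] at hl
  have h1 := dot_self_nonneg z.1
  have h2 := dot_self_nonneg z.2
  have hpos : (0:ℝ) < 1 / (2 * s) := by positivity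
  have hz1 : z.1 ⬝ᵥ z.1 = 0 := by nlinarith
  have hz2 : z.2 ⬝ᵥ z.2 = 0 := by nlinarith
  exact Prod.ext (dot_self_eq_zero hz1) (dot_self_eq_zero hz2)

lemma Bf_zero_left (w : (Fin n → ℝ) × (Fin m → ℝ)) : Bf A s 0 w = 0 := by
  unfold Bf
  simp

lemma Bf_zero_right (z : (Fin n → ℝ) × (Fin m → ℝ)) : Bf A s z 0 = 0 := by
  unfold Bf
  simp

lemma Bf_cauchy {s : ℝ} (hs : 0 < s) (hsA : 2 * s * specNorm A ≤ 1)
    (z w : (Fin n → ℝ) × (Fin m → ℝ)) :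
    Bf A s z w ≤ PsNorm A s z * PsNorm A s w := by
  set nz := PsNorm A s z with hnz
  set nw := PsNorm A s w with hnw
  have hnz0 : 0 ≤ nz := PsNorm_nonneg A s z
  have hnw0 : 0 ≤ nw := PsNorm_nonneg A s w
  rcases eq_or_lt_of_le (mul_nonneg hnz0 hnw0) with hzero | hpos
  · -- nz * nw = 0, so nz = 0 or nw = 0, so z = 0 or w = 0
    rcases mul_eq_zero.1 hzero.symm with h0 | h0
    · have hz : z = 0 := by
        apply PsSq_eq_zero A hs hsA
        have := PsNorm_sq A hs hsA z
        rw [← hnz, h0] at this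
        simpa using this.symm
      rw [hz, Bf_zero_left, ← hzero]
    · have hw : w = 0 := by
        apply PsSq_eq_zero A hs hsA
        have := PsNorm_sq A hs hsA w
        rw [← hnw, h0] at this
        simpa using this.symm
      rw [hw, Bf_zero_right, ← hzero]
  · have hkey : 0 ≤ PsSq A s (nw • z - nz • w) := PsSq_nonneg A hs hsA _
    rw [PsSq_expand_comb] at hkey
    rw [← PsNorm_sq A hs hsA z, ← PsNorm_sq A hs hsA w] at hkey
    have hid : nw ^ 2 * nz ^ 2 - 2 * nw * nz * Bf A s z w + nz ^ 2 * nw ^ 2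
        = 2 * (nz * nw) * (nz * nw - Bf A s z w) := by ring
    rw [← hnz, ← hnw, hid] at hkey
    nlinarith
end BfLemmas

section Master
variable {m n : ℕ} (A : Matrix (Fin m) (Fin n) ℝ) (b : Fin m → ℝ) (c : Fin n → ℝ)

lemma proj_VI (a x : Fin n → ℝ) (hx : ∀ i, 0 ≤ x i) :
    0 ≤ (x - projPos a) ⬝ᵥ (projPos a - a) := by
  apply Finset.sum_nonneg
  intro i _
  simp only [Pi.sub_apply, projPos]
  rcases le_or_gt 0 (a i) with h | h
  · rw [max_eq_left h]
    simp
  · rw [max_eq_right h.le]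
    have := hx i
    nlinarith

lemma master_identity {s : ℝ} (hs : 0 < s) (z w : (Fin n → ℝ) × (Fin m → ℝ))
    (v : Fin n → ℝ) :
    Bf A s (z - (v, z.2 - s • A.mulVec ((2:ℝ) • v - z.1) + s • b))
        ((v, z.2 - s • A.mulVec ((2:ℝ) • v - z.1) + s • b) - w)
      - (lagr A b c v w.2 - lagr A b c w.1 (z.2 - s • A.mulVec ((2:ℝ) • v - z.1) + s • b))
    = (1 / s) * ((w.1 - v) ⬝ᵥ (v - (z.1 + s • Aᵀ.mulVec z.2 - s • c))) := by
  have hadj : ∀ x : Fin n → ℝ, x ⬝ᵥ Aᵀ.mulVec z.2 = A.mulVec x ⬝ᵥ z.2 := by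
    intro x
    rw [Matrix.dotProduct_mulVec, Matrix.vecMul_transpose]
  unfold Bf lagr
  simp only [Prod.fst_sub, Prod.snd_sub]
  simp only [sub_dotProduct, dotProduct_sub, add_dotProduct,
    dotProduct_add, smul_dotProduct, dotProduct_smul,
    Matrix.mulVec_sub, Matrix.mulVec_add, Matrix.mulVec_smul, smul_eq_mul, hadj]
  field_simp
  simp only [dotProduct_comm z.1 v, dotProduct_comm w.1 v,
    dotProduct_comm w.1 c, dotProduct_comm v c,
    dotProduct_comm w.1 z.1, dotProduct_comm z.1 c,
    dotProduct_comm w.2 (A.mulVec v), dotProduct_comm z.2 (A.mulVec w.1),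
    dotProduct_comm w.2 (A.mulVec z.1), dotProduct_comm z.2 (A.mulVec v),
    dotProduct_comm z.2 (A.mulVec z.1),
    dotProduct_comm b (A.mulVec v), dotProduct_comm b (A.mulVec z.1),
    dotProduct_comm b (A.mulVec w.1), dotProduct_comm b z.2,
    dotProduct_comm b w.2,
    dotProduct_comm (A.mulVec z.1) (A.mulVec v),
    dotProduct_comm (A.mulVec w.1) (A.mulVec v),
    dotProduct_comm (A.mulVec w.1) (A.mulVec z.1)]
  ring

/-- Structural form of one PDHG step. -/
lemma pdhgT_eq {s : ℝ} (z : (Fin n → ℝ) × (Fin m → ℝ)) :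
    pdhgT A b c s z = (projPos (z.1 + s • Aᵀ.mulVec z.2 - s • c),
      z.2 - s • A.mulVec ((2:ℝ) • projPos (z.1 + s • Aᵀ.mulVec z.2 - s • c) - z.1) + s • b) :=
  rfl

lemma inZ_pdhgT {s : ℝ} (z : (Fin n → ℝ) × (Fin m → ℝ)) : inZ (pdhgT A b c s z) := by
  intro i
  rw [pdhgT_eq]
  exact le_max_right _ _

/-- The master gap inequality: for any `w ∈ Z`,
`L(u₁, w₂) - L(w₁, u₂) ≤ ⟨z - u, u - w⟩_{P_s}` where `u = T z`. -/
lemma master {s : ℝ} (hs : 0 < s) (z w : (Fin n → ℝ) × (Fin m → ℝ)) (hw : inZ w) :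
    lagr A b c (pdhgT A b c s z).1 w.2 - lagr A b c w.1 (pdhgT A b c s z).2 ≤
      Bf A s (z - pdhgT A b c s z) (pdhgT A b c s z - w) := by
  set v : Fin n → ℝ := projPos (z.1 + s • Aᵀ.mulVec z.2 - s • c) with hv
  have hVI := proj_VI (z.1 + s • Aᵀ.mulVec z.2 - s • c) w.1 hw
  have hid := master_identity A b c hs z w v
  have hTz : pdhgT A b c s z = (v, z.2 - s • A.mulVec ((2:ℝ) • v - z.1) + s • b) := pdhgT_eq A b c z
  rw [hTz]
  have hnn : 0 ≤ (1 / s) * ((w.1 - v) ⬝ᵥ (v - (z.1 + s • Aᵀ.mulVec z.2 - s • c))) := by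
    apply mul_nonneg (by positivity)
    simpa [hv] using hVI
  simp only at hid ⊢
  linarith [hid, hnn]

end Master

section Step
variable {m n : ℕ} (A : Matrix (Fin m) (Fin n) ℝ) (b : Fin m → ℝ) (c : Fin n → ℝ)

lemma Bf_expand_key (s : ℝ) (z w u : (Fin n → ℝ) × (Fin m → ℝ)) :
    PsSq A s (u - w) = PsSq A s (z - w) - PsSq A s (z - u) - 2 * Bf A s (z - u) (u - w) := by
  unfold PsSq Bf
  simp only [Prod.fst_sub, Prod.snd_sub]
  simp only [sub_dotProduct, dotProduct_sub, Matrix.mulVec_sub]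
  simp only [dotProduct_comm z.1 u.1, dotProduct_comm z.1 w.1,
    dotProduct_comm u.1 w.1, dotProduct_comm z.2 u.2,
    dotProduct_comm z.2 w.2, dotProduct_comm u.2 w.2,
    dotProduct_comm (A.mulVec z.1) u.2, dotProduct_comm (A.mulVec z.1) w.2,
    dotProduct_comm (A.mulVec u.1) z.2, dotProduct_comm (A.mulVec u.1) w.2,
    dotProduct_comm (A.mulVec w.1) z.2, dotProduct_comm (A.mulVec w.1) u.2]
  ring

/-- One-step decrease towards any saddle point. -/
lemma step_decrease {s : ℝ} (hs : 0 < s) (z : (Fin n → ℝ) × (Fin m → ℝ))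
    (w : (Fin n → ℝ) × (Fin m → ℝ)) (hw : isSaddle A b c w) :
    PsSq A s (pdhgT A b c s z - w) ≤ PsSq A s (z - w) - PsSq A s (z - pdhgT A b c s z) := by
  set u := pdhgT A b c s z with hu
  have hZu : inZ u := inZ_pdhgT A b c z
  have hsaddle := hw.2 u hZu
  have hgap : 0 ≤ lagr A b c u.1 w.2 - lagr A b c w.1 u.2 := by
    have h1 : lagr A b c w.1 u.2 ≤ lagr A b c w.1 w.2 := hsaddle.1
    have h2 : lagr A b c w.1 w.2 ≤ lagr A b c u.1 w.2 := hsaddle.2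
    linarith
  have hmaster := master A b c hs z w hw.1
  have hBf : 0 ≤ Bf A s (z - u) (u - w) := le_trans hgap hmaster
  have hexp := Bf_expand_key A s z w u
  linarith

end Step

section Dist
variable {m n : ℕ} (A : Matrix (Fin m) (Fin n) ℝ) (b : Fin m → ℝ) (c : Fin n → ℝ)

lemma enormP_neg_sub (u w : (Fin n → ℝ) × (Fin m → ℝ)) : enormP (u - w) = enormP (w - u) := by
  unfold enormP
  congr 1
  have h1 : (u - w).1 = -((w - u).1) := by simp
  have h2 : (u - w).2 = -((w - u).2) := by simp
  rw [h1, h2, neg_dotProduct, dotProduct_neg, neg_dotProduct,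
    dotProduct_neg]
  ring

lemma rho_bound {s : ℝ} (hs : 0 < s) (hsA : 2 * s * specNorm A ≤ 1) {r : ℝ} (hr : 0 < r)
    (z : (Fin n → ℝ) × (Fin m → ℝ)) :
    rho A b c r (pdhgT A b c s z) ≤
      Real.sqrt (3 / (2 * s)) * PsNorm A s (z - pdhgT A b c s z) := by
  set u := pdhgT A b c s z with hu
  set C : ℝ := Real.sqrt (3 / (2 * s)) * PsNorm A s (z - u) with hC
  have hC0 : 0 ≤ C := mul_nonneg (Real.sqrt_nonneg _) (PsNorm_nonneg _ _ _)
  have hsup : sSup {g | ∃ w : (Fin n → ℝ) × (Fin m → ℝ), inZ w ∧ enormP (w - u) ≤ r ∧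
      g = lagr A b c u.1 w.2 - lagr A b c w.1 u.2} ≤ C * r := by
    apply Real.sSup_le
    · rintro g ⟨w, hwZ, hwr, rfl⟩
      have h1 := master A b c hs z w hwZ
      have h2 := Bf_cauchy A hs hsA (z - u) (u - w)
      have h3 := PsNorm_le_enormP A hs hsA (u - w)
      have h4 : enormP (u - w) ≤ r := by rw [enormP_neg_sub]; exact hwr
      have h5 : PsNorm A s (u - w) ≤ Real.sqrt (3 / (2 * s)) * r := by
        refine h3.trans ?_
        exact mul_le_mul_of_nonneg_left h4 (Real.sqrt_nonneg _)
      calc lagr A b c u.1 w.2 - lagr A b c w.1 u.2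
          ≤ PsNorm A s (z - u) * PsNorm A s (u - w) := le_trans h1 h2
        _ ≤ PsNorm A s (z - u) * (Real.sqrt (3 / (2 * s)) * r) :=
            mul_le_mul_of_nonneg_left h5 (PsNorm_nonneg _ _ _)
        _ = C * r := by rw [hC]; ring
    · positivity
  unfold rho
  rw [one_div]
  calc r⁻¹ * sSup _ ≤ r⁻¹ * (C * r) := by
        apply mul_le_mul_of_nonneg_left hsup (by positivity)
    _ = C := by field_simp
  
lemma distPs_le_dist2 {s : ℝ} (hs : 0 < s) (hsA : 2 * s * specNorm A ≤ 1)
    (hne : ∃ w, isSaddle A b c w) (z : (Fin n → ℝ) × (Fin m → ℝ)) :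
    distPs A b c s z ≤ Real.sqrt (3 / (2 * s)) * dist2 A b c z := by
  set C : ℝ := Real.sqrt (3 / (2 * s)) with hC
  have hCpos : 0 < C := Real.sqrt_pos.2 (by positivity)
  rw [← div_le_iff₀' hCpos]
  unfold dist2
  apply le_csInf
  · obtain ⟨w, hw⟩ := hne
    exact ⟨enormP (z - w), w, hw, rfl⟩
  · rintro d ⟨w, hw, rfl⟩
    rw [div_le_iff₀' hCpos]
    have h1 : distPs A b c s z ≤ PsNorm A s (z - w) := by
      apply csInf_le
      · exact ⟨0, by rintro d ⟨w', _, rfl⟩; exact PsNorm_nonneg _ _ _⟩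
      · exact ⟨w, hw, rfl⟩
    exact h1.trans (PsNorm_le_enormP A hs hsA _)

lemma distPs_nonneg (s : ℝ) (hne : ∃ w, isSaddle A b c w)
    (z : (Fin n → ℝ) × (Fin m → ℝ)) : 0 ≤ distPs A b c s z := by
  apply le_csInf
  · obtain ⟨w, hw⟩ := hne
    exact ⟨PsNorm A s (z - w), w, hw, rfl⟩
  · rintro d ⟨w', _, rfl⟩
    exact PsNorm_nonneg _ _ _

end Dist

section Seq
variable {m n : ℕ} (A : Matrix (Fin m) (Fin n) ℝ) (b : Fin m → ℝ) (c : Fin n → ℝ)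

/-- One-step inequality on distances. -/
lemma seq_step {s : ℝ} (hs : 0 < s) (hsA : 2 * s * specNorm A ≤ 1)
    (hne : ∃ w, isSaddle A b c w) (z : ℕ → (Fin n → ℝ) × (Fin m → ℝ))
    (hz : ∀ k, z (k + 1) = pdhgT A b c s (z k)) (k : ℕ) :
    distPs A b c s (z (k+1)) ^ 2 + PsSq A s (z k - z (k+1)) ≤ distPs A b c s (z k) ^ 2 := by
  set D1 := distPs A b c s (z (k+1)) with hD1
  set Q := PsSq A s (z k - z (k+1)) with hQdef
  have hQ0 : 0 ≤ Q := by rw [hQdef]; exact PsSq_nonneg A hs hsA _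
  have hD10 : 0 ≤ D1 := distPs_nonneg A b c s hne _
  have hbdd : BddBelow {d | ∃ w, isSaddle A b c w ∧ d = PsNorm A s (z k - w)} :=
    ⟨0, by rintro d ⟨w', _, rfl⟩; exact PsNorm_nonneg _ _ _⟩
  have key : ∀ w, isSaddle A b c w → Real.sqrt (D1 ^ 2 + Q) ≤ PsNorm A s (z k - w) := by
    intro w hw
    have hstep := step_decrease A b c hs (z k) w hw
    rw [← hz k] at hstep
    have h1 : D1 ≤ PsNorm A s (z (k+1) - w) := csInf_le
      ⟨0, by rintro d ⟨w', _, rfl⟩; exact PsNorm_nonneg _ _ _⟩ ⟨w, hw, rfl⟩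
    have h2 : D1 ^ 2 ≤ PsSq A s (z (k+1) - w) := by
      rw [← PsNorm_sq A hs hsA (z (k+1) - w)]
      exact pow_le_pow_left₀ hD10 h1 2
    have h3 : D1 ^ 2 + Q ≤ PsSq A s (z k - w) := by
      rw [hQdef]
      linarith
    calc Real.sqrt (D1 ^ 2 + Q) ≤ Real.sqrt (PsSq A s (z k - w)) := Real.sqrt_le_sqrt h3
      _ = PsNorm A s (z k - w) := rfl
  have hsq : Real.sqrt (D1 ^ 2 + Q) ≤ distPs A b c s (z k) := by
    apply le_csInf
    · obtain ⟨w, hw⟩ := hne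
      exact ⟨PsNorm A s (z k - w), w, hw, rfl⟩
    · rintro d ⟨w, hw, rfl⟩
      exact key w hw
  have h0 : 0 ≤ distPs A b c s (z k) := distPs_nonneg A b c s hne _
  have := pow_le_pow_left₀ (Real.sqrt_nonneg _) hsq 2
  rwa [Real.sq_sqrt (by positivity)] at this

lemma seq_mono {s : ℝ} (hs : 0 < s) (hsA : 2 * s * specNorm A ≤ 1)
    (hne : ∃ w, isSaddle A b c w) (z : ℕ → (Fin n → ℝ) × (Fin m → ℝ))
    (hz : ∀ k, z (k + 1) = pdhgT A b c s (z k)) :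
    ∀ j k, j ≤ k → distPs A b c s (z k) ≤ distPs A b c s (z j) := by
  have hone : ∀ k, distPs A b c s (z (k+1)) ≤ distPs A b c s (z k) := by
    intro k
    have h := seq_step A b c hs hsA hne z hz k
    have hQ0 : 0 ≤ PsSq A s (z k - z (k+1)) := PsSq_nonneg A hs hsA _
    have h1 : distPs A b c s (z (k+1)) ^ 2 ≤ distPs A b c s (z k) ^ 2 := by linarith
    have h2 := distPs_nonneg A b c s hne (z (k+1))
    have h3 := distPs_nonneg A b c s hne (z k)
    nlinarith
  intro j k hjk
  induction k with
  | zero => simp_all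
  | succ k ih =>
    rcases Nat.lt_or_ge j (k+1) with h | h
    · exact (hone k).trans (ih (Nat.lt_succ_iff.1 h))
    · have : j = k + 1 := le_antisymm hjk h
      rw [this]

lemma seq_sum {s : ℝ} (hs : 0 < s) (hsA : 2 * s * specNorm A ≤ 1)
    (hne : ∃ w, isSaddle A b c w) (z : ℕ → (Fin n → ℝ) × (Fin m → ℝ))
    (hz : ∀ k, z (k + 1) = pdhgT A b c s (z k)) (j N : ℕ) :
    ∑ i ∈ Finset.range N, PsSq A s (z (j + i) - z (j + i + 1))
      ≤ distPs A b c s (z j) ^ 2 - distPs A b c s (z (j + N)) ^ 2 := by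
  induction N with
  | zero => simp
  | succ N ih =>
    rw [Finset.sum_range_succ]
    have hstep := seq_step A b c hs hsA hne z hz (j + N)
    have : j + (N + 1) = j + N + 1 := by ring
    rw [this]
    linarith

lemma block_decrease {s α R : ℝ} (hs : 0 < s) (hsA : 2 * s * specNorm A ≤ 1)
    (hα : 0 < α) (hR : 0 < R) (hne : ∃ w, isSaddle A b c w)
    (z : ℕ → (Fin n → ℝ) × (Fin m → ℝ))
    (hz : ∀ k, z (k + 1) = pdhgT A b c s (z k))
    (hbound : ∀ k, enormP (z k) ≤ R)
    (hsharp : ∀ w : (Fin n → ℝ) × (Fin m → ℝ), inZ w → enormP w ≤ R →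
      ∀ r : ℝ, 0 < r → r ≤ R → α * dist2 A b c w ≤ rho A b c r w)
    (K : ℕ) (hK1 : 1 ≤ K) (j : ℕ) :
    distPs A b c s (z (j + K)) ≤
      ((3 / (2 * s)) / α / Real.sqrt K) * distPs A b c s (z j) := by
  set Dj := distPs A b c s (z j) with hDj
  have hDj0 : 0 ≤ Dj := distPs_nonneg A b c s hne _
  have hKpos : (0:ℝ) < K := by exact_mod_cast hK1
  -- there is a good index i < K
  have hsum := seq_sum A b c hs hsA hne z hz j K
  have hDjK0 : 0 ≤ distPs A b c s (z (j + K)) ^ 2 := sq_nonneg _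
  have hgood : ∃ i < K, PsSq A s (z (j + i) - z (j + i + 1)) ≤ Dj ^ 2 / K := by
    by_contra hcon
    push_neg at hcon
    have hlt : ∀ i ∈ Finset.range K, Dj ^ 2 / K < PsSq A s (z (j + i) - z (j + i + 1)) :=
      fun i hi => hcon i (Finset.mem_range.1 hi)
    have hsum2 : ∑ i ∈ Finset.range K, (Dj ^ 2 / K)
        < ∑ i ∈ Finset.range K, PsSq A s (z (j + i) - z (j + i + 1)) :=
      Finset.sum_lt_sum_of_nonempty (by simp; omega) hlt
    rw [Finset.sum_const, Finset.card_range, nsmul_eq_mul] at hsum2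
    have : (K:ℝ) * (Dj ^ 2 / K) = Dj ^ 2 := by field_simp
    rw [this] at hsum2
    linarith
  obtain ⟨i, hiK, hQi⟩ := hgood
  -- bound the distance at step j+i+1
  have hu : z (j + i + 1) = pdhgT A b c s (z (j + i)) := hz (j + i)
  have hZu : inZ (z (j + i + 1)) := by rw [hu]; exact inZ_pdhgT A b c _
  have hsharp' := hsharp (z (j + i + 1)) hZu (hbound (j + i + 1)) R hR le_rfl
  have hrho : rho A b c R (z (j + i + 1)) ≤
      Real.sqrt (3 / (2 * s)) * PsNorm A s (z (j + i) - z (j + i + 1)) := by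
    rw [hu]
    exact rho_bound A b c hs hsA hR (z (j + i))
  have hPsN : PsNorm A s (z (j + i) - z (j + i + 1)) ≤ Dj / Real.sqrt K := by
    have h1 : PsNorm A s (z (j + i) - z (j + i + 1)) = Real.sqrt (PsSq A s (z (j + i) - z (j + i + 1))) := rfl
    rw [h1]
    calc Real.sqrt (PsSq A s (z (j + i) - z (j + i + 1))) ≤ Real.sqrt (Dj ^ 2 / K) :=
          Real.sqrt_le_sqrt hQi
      _ = Dj / Real.sqrt K := by
          rw [Real.sqrt_div (sq_nonneg Dj), Real.sqrt_sq hDj0]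
  have hdist2 : dist2 A b c (z (j + i + 1)) ≤
      Real.sqrt (3 / (2 * s)) * (Dj / Real.sqrt K) / α := by
    rw [le_div_iff₀ hα, mul_comm]
    calc α * dist2 A b c (z (j + i + 1)) ≤ rho A b c R (z (j + i + 1)) := hsharp'
      _ ≤ Real.sqrt (3 / (2 * s)) * PsNorm A s (z (j + i) - z (j + i + 1)) := hrho
      _ ≤ Real.sqrt (3 / (2 * s)) * (Dj / Real.sqrt K) :=
          mul_le_mul_of_nonneg_left hPsN (Real.sqrt_nonneg _)
  have hDfin : distPs A b c s (z (j + i + 1)) ≤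
      (3 / (2 * s)) / α / Real.sqrt K * Dj := by
    calc distPs A b c s (z (j + i + 1))
        ≤ Real.sqrt (3 / (2 * s)) * dist2 A b c (z (j + i + 1)) :=
          distPs_le_dist2 A b c hs hsA hne _
      _ ≤ Real.sqrt (3 / (2 * s)) * (Real.sqrt (3 / (2 * s)) * (Dj / Real.sqrt K) / α) :=
          mul_le_mul_of_nonneg_left hdist2 (Real.sqrt_nonneg _)
      _ = (3 / (2 * s)) / α / Real.sqrt K * Dj := by
          rw [show Real.sqrt (3 / (2 * s)) * (Real.sqrt (3 / (2 * s)) * (Dj / Real.sqrt (K:ℝ)) / α)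
              = (Real.sqrt (3 / (2 * s)) * Real.sqrt (3 / (2 * s))) * (Dj / Real.sqrt (K:ℝ)) / α from by ring,
            Real.mul_self_sqrt (by positivity : (0:ℝ) ≤ 3 / (2 * s))]
          ring
  have hmono : distPs A b c s (z (j + K)) ≤ distPs A b c s (z (j + i + 1)) :=
    seq_mono A b c hs hsA hne z hz (j + i + 1) (j + K) (by omega)
  exact hmono.trans hDfin

end Seq

/-- **Global linear convergence of last-iterate PDHG on sharp LP** (Theorem 3):
with step size `0 < s ≤ 1/(2‖A‖₂)`, iterates bounded by `R`, and `α`-sharpness on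
`{‖z‖₂ ≤ R}`, for `K = ⌈4e/(sα)²⌉` and every `k ≥ K`,
`dist_{P_s}(zᵏ, Z*) ≤ exp(1/2 − k/(2K))·dist_{P_s}(z⁰, Z*)`. -/
theorem pdhg_linear_convergence {m n : ℕ} (A : Matrix (Fin m) (Fin n) ℝ)
    (b : Fin m → ℝ) (c : Fin n → ℝ) (s : ℝ) (hs : 0 < s)
    (hsA : 2 * s * specNorm A ≤ 1) (α R : ℝ) (hα : 0 < α) (hR : 0 < R)
    (z : ℕ → (Fin n → ℝ) × (Fin m → ℝ)) (hz0 : inZ (z 0))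
    (hz : ∀ k, z (k + 1) = pdhgT A b c s (z k))
    (hbound : ∀ k, enormP (z k) ≤ R)
    (hsharp : ∀ w : (Fin n → ℝ) × (Fin m → ℝ), inZ w → enormP w ≤ R →
      ∀ r : ℝ, 0 < r → r ≤ R → α * dist2 A b c w ≤ rho A b c r w)
    (K : ℕ) (hK : K = ⌈4 * Real.exp 1 / (s * α) ^ 2⌉₊) :
    ∀ k : ℕ, K ≤ k →
      distPs A b c s (z k) ≤
        Real.exp (1 / 2 - (k : ℝ) / (2 * (K : ℝ))) * distPs A b c s (z 0) := by
  intro k hk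
  by_cases hne : ∃ w, isSaddle A b c w
  · -- main case
    have hsα : 0 < s * α := mul_pos hs hα
    have hK1 : 1  ≤ K := by
      rw [hK]
      have hpos : (0:ℝ) < 4 * Real.exp 1 / (s * α) ^ 2 := by positivity
      exact Nat.one_le_iff_ne_zero.2 (by
        intro h0
        have := Nat.ceil_eq_zero.1 h0
        linarith)
    have hKpos : (0:ℝ) < K := by exact_mod_cast hK1
    have hKge : (4 * Real.exp 1 / (s * α) ^ 2 : ℝ) ≤ K := by
      rw [hK]; exact Nat.le_ceil _
    -- the contraction factor is at most exp(-1/2)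
    have hsqrtK : 2 * Real.sqrt (Real.exp 1) / (s * α) ≤ Real.sqrt K := by
      have h1 : Real.sqrt (4 * Real.exp 1 / (s * α) ^ 2) ≤ Real.sqrt K :=
        Real.sqrt_le_sqrt hKge
      have h2 : Real.sqrt (4 * Real.exp 1 / (s * α) ^ 2)
          = 2 * Real.sqrt (Real.exp 1) / (s * α) := by
        rw [Real.sqrt_div (by positivity : (0:ℝ) ≤ 4 * Real.exp 1),
          Real.sqrt_sq hsα.le,
          show (4:ℝ) * Real.exp 1 = 2 ^ 2 * Real.exp 1 from by norm_num,
          Real.sqrt_mul (by positivity) _, Real.sqrt_sq (by norm_num : (0:ℝ) ≤ 2)]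
      rw [← h2]; exact h1
    have hexp_half : Real.sqrt (Real.exp 1) = Real.exp (1 / 2) := by
      rw [show Real.exp 1 = Real.exp (1 / 2) ^ 2 from by
        rw [← Real.exp_nat_mul]; norm_num,
        Real.sqrt_sq (Real.exp_pos _).le]
    have hfac : (3 / (2 * s)) / α / Real.sqrt K ≤ Real.exp (-(1 / 2) : ℝ) := by
      have hsqrtKpos : 0 < Real.sqrt (K : ℝ) := Real.sqrt_pos.2 hKpos
      rw [div_le_iff₀ hsqrtKpos]
      have h3 : Real.exp (-(1 / 2) : ℝ) * Real.sqrt K ≥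
          Real.exp (-(1 / 2) : ℝ) * (2 * Real.sqrt (Real.exp 1) / (s * α)) :=
        mul_le_mul_of_nonneg_left hsqrtK (Real.exp_pos _).le
      have h4 : Real.exp (-(1 / 2) : ℝ) * (2 * Real.sqrt (Real.exp 1) / (s * α))
          = 2 / (s * α) := by
        rw [hexp_half]
        rw [show Real.exp (-(1/2):ℝ) * (2 * Real.exp (1/2) / (s * α))
            = 2 * (Real.exp (-(1/2):ℝ) * Real.exp (1/2)) / (s * α) from by ring,
          ← Real.exp_add]
        norm_num
      have h5 : (3 / (2 * s)) / α ≤ 2 / (s * α) := by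
        rw [div_div, div_le_div_iff₀ (by positivity) (by positivity)]
        nlinarith [hsα]
      linarith
    -- block decrease
    have hblock : ∀ j : ℕ, distPs A b c s (z (j + K)) ≤
        Real.exp (-(1 / 2) : ℝ) * distPs A b c s (z j) := by
      intro j
      have h1 := block_decrease A b c hs hsA hα hR hne z hz hbound hsharp K hK1 j
      have h2 : (3 / (2 * s)) / α / Real.sqrt K * distPs A b c s (z j) ≤
          Real.exp (-(1 / 2) : ℝ) * distPs A b c s (z j) :=
        mul_le_mul_of_nonneg_right hfac (distPs_nonneg A b c s hne _)
      linarith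
    -- iterate over blocks
    have hiter : ∀ q : ℕ, distPs A b c s (z (q * K)) ≤
        Real.exp (-(q : ℝ) / 2) * distPs A b c s (z 0) := by
      intro q
      induction q with
      | zero => simp
      | succ q ih =>
        have h1 : (q + 1) * K = q * K + K := by ring
        rw [h1]
        calc distPs A b c s (z (q * K + K))
            ≤ Real.exp (-(1 / 2) : ℝ) * distPs A b c s (z (q * K)) := hblock (q * K)
          _ ≤ Real.exp (-(1 / 2) : ℝ) * (Real.exp (-(q : ℝ) / 2) * distPs A b c s (z 0)) :=
              mul_le_mul_of_nonneg_left ih (Real.exp_pos _).le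
          _ = Real.exp (-((q:ℕ) + 1 : ℝ) / 2) * distPs A b c s (z 0) := by
              rw [show Real.exp (-(1/2):ℝ) * (Real.exp (-(q:ℝ)/2) * distPs A b c s (z 0))
                  = (Real.exp (-(1/2):ℝ) * Real.exp (-(q:ℝ)/2)) * distPs A b c s (z 0) from by ring,
                ← Real.exp_add]
              congr 1
              push_cast
              ring
          _ = Real.exp (-((q + 1 : ℕ) : ℝ) / 2) * distPs A b c s (z 0) := by
              congr 2
              push_cast
              ring
    -- conclude
    set q := k / K with hq
    have hKne : K ≠ 0 := by omega
    have hqK : q * K ≤ k := Nat.div_mul_le_self k K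
    have hmod : k < K * q + K := by
      have e1 : K * q + k % K = k := by rw [hq]; exact Nat.div_add_mod k K
      have e2 : k % K < K := Nat.mod_lt _ (by omega)
      omega
    have h1 : distPs A b c s (z k) ≤ distPs A b c s (z (q * K)) :=
      seq_mono A b c hs hsA hne z hz (q * K) k hqK
    have h2 := hiter q
    have hexp : Real.exp (-(q : ℝ) / 2) ≤ Real.exp (1 / 2 - (k : ℝ) / (2 * (K : ℝ))) := by
      apply Real.exp_le_exp.2
      have hk' : (k : ℝ) < (K : ℝ) * q + K := by exact_mod_cast hmod
      have h2K : (0:ℝ) < 2 * (K:ℝ) := by positivity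
      have hgoal : (k:ℝ) / (2 * (K:ℝ)) ≤ 1 / 2 + (q:ℝ) / 2 := by
        rw [div_le_iff₀ h2K]
        nlinarith [hk']
      linarith
    calc distPs A b c s (z k) ≤ Real.exp (-(q : ℝ) / 2) * distPs A b c s (z 0) :=
          h1.trans h2
      _ ≤ Real.exp (1 / 2 - (k : ℝ) / (2 * (K : ℝ))) * distPs A b c s (z 0) :=
          mul_le_mul_of_nonneg_right hexp (distPs_nonneg A b c s hne _)
  · -- no saddle points: both sides are sInf ∅ = 0
    have hempty : ∀ y : (Fin n → ℝ) × (Fin m → ℝ),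
        {d | ∃ w, isSaddle A b c w ∧ d = PsNorm A s (y - w)} = ∅ := by
      intro y
      ext d
      simp only [Set.mem_setOf_eq, Set.mem_empty_iff_false, iff_false]
      rintro ⟨w, hw, _⟩
      exact hne ⟨w, hw⟩
    unfold distPs
    rw [hempty, hempty, Real.sInf_empty]
    simp
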